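/- arXiv:2307.10306 — 2 statements merged into one kernel-verified Lean document; each statement's English description precedes it below -/
import Mathlib

section
/- Let Q be a polarized quiver in which all special arrows are loops, and let w be a symmetric string for Q (that is, w ∈ St(Q) with w = w^{-1}). Then there exist a unique left inextensible word v and a unique special letter ε* with ε* = (ε*)^{-1} such that w = v ε* v^{-1}. -/
/- Core combinatorics of polarized quivers, letters, words, strings and bands,
   following Geiß, "Homomorphisms between representations of skewed-gentle algebras". -/

namespace SG

open Classical

/-- Signs: `true` stands for `+1`, `false` for `-1`. -/
abbrev Sign := Bool

/-- The raw data of a polarized quiver: vertices, arrows, a set of special arrows,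
and polarized source/target maps with values in `V × {±1}`. -/
structure PolQuiv where
  V : Type
  A : Type
  special : A → Prop
  src : A → V × Sign
  tgt : A → V × Sign

/-- The five kinds of letters associated to a polarized quiver:
direct (ordinary), inverse, special, trivial and trivial inverse letters. -/
inductive PLetter (V A : Type) where
  | ord : A → PLetter V A
  | inv : A → PLetter V A
  | sp : A → PLetter V A
  | triv : V → Sign → PLetter V A
  | trivInv : V → Sign → PLetter V A

namespace PolQuiv

variable (Q : PolQuiv)

/-- `-(i,ρ) = (i,-ρ)`. -/
def nneg (p : Q.V × Sign) : Q.V × Sign := (p.1, !p.2)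

/-- The axioms of a polarized quiver: finiteness, injectivity of the polarized source and
target maps, special arrows have polarization `-1` at both ends, and every special arrow
has a unique dual special arrow. -/
def IsPolarized : Prop :=
  Finite Q.V ∧ Finite Q.A ∧
  Function.Injective Q.src ∧ Function.Injective Q.tgt ∧
  (∀ a, Q.special a → (Q.src a).2 = false ∧ (Q.tgt a).2 = false) ∧
  (∀ a, Q.special a → ∃! a', Q.special a' ∧ Q.src a' = Q.tgt a ∧ Q.tgt a' = Q.src a)

/-- The dual special arrow `ε'` of a special arrow `ε` (junk value on other arrows). -/
noncomputable def dual (a : Q.A) : Q.A :=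
  if h : ∃ a', Q.special a' ∧ Q.src a' = Q.tgt a ∧ Q.tgt a' = Q.src a then h.choose else a

/-- An admissible path `a₁ a₂ ⋯ a_l` : `s(aᵢ) = -t(a_{i+1})`. -/
def IsAdmPath (p : List Q.A) : Prop :=
  p ≠ [] ∧ ∀ n a b, p[n]? = some a → p[n + 1]? = some b → Q.src a = Q.nneg (Q.tgt b)

/-- An admissible polarized quiver has only finitely many admissible paths. -/
def IsAdmissible : Prop := Q.IsPolarized ∧ {p : List Q.A | Q.IsAdmPath p}.Finite

/-- A loop. -/
def IsLoopArr (a : Q.A) : Prop := (Q.src a).1 = (Q.tgt a).1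

/-- A skewed-gentle polarized quiver: admissible, and all special arrows are loops. -/
def SkewedGentle : Prop := Q.IsAdmissible ∧ ∀ a, Q.special a → Q.IsLoopArr a

/-- A gentle polarized quiver: admissible with no special arrows. -/
def Gentle : Prop := Q.IsAdmissible ∧ ∀ a, ¬ Q.special a

abbrev Ltr := PLetter Q.V Q.A
abbrev Wd := List (PLetter Q.V Q.A)

/-- `(i,ρ)` admits trivial letters iff it is not the source of a special arrow. -/
def trivOK (i : Q.V) (ρ : Sign) : Prop := ∀ ε, Q.special ε → Q.src ε ≠ (i, ρ)

/-- Validity of a letter for `Q`. -/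
def IsLetter : Q.Ltr → Prop
  | .ord a => ¬ Q.special a
  | .inv a => ¬ Q.special a
  | .sp a => Q.special a
  | .triv i ρ => Q.trivOK i ρ
  | .trivInv i ρ => Q.trivOK i ρ

/-- The (partial) source of a letter; `none` encodes `*`. -/
def lsrc : Q.Ltr → Option (Q.V × Sign)
  | .ord a => some (Q.src a)
  | .inv a => some (Q.tgt a)
  | .sp a => some ((Q.src a).1, false)
  | .triv _ _ => none
  | .trivInv i ρ => some (i, ρ)

/-- The (partial) target of a letter; `none` encodes `*`. -/
def ltgt : Q.Ltr → Option (Q.V × Sign)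
  | .ord a => some (Q.tgt a)
  | .inv a => some (Q.src a)
  | .sp a => some ((Q.tgt a).1, false)
  | .triv i ρ => some (i, ρ)
  | .trivInv _ _ => none

/-- The inverse of a letter; `(ε^*)⁻¹ = (ε')^*`. -/
noncomputable def linv : Q.Ltr → Q.Ltr
  | .ord a => .inv a
  | .inv a => .ord a
  | .sp a => .sp (Q.dual a)
  | .triv i ρ => .trivInv i ρ
  | .trivInv i ρ => .triv i ρ

/-- The inverse of a word. -/
noncomputable def winv (w : Q.Wd) : Q.Wd := (w.map Q.linv).reverse

/-- A word: all letters valid and `s(wᵢ) = -t(w_{i+1})`. -/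
def IsWord (w : Q.Wd) : Prop :=
  (∀ l ∈ w, Q.IsLetter l) ∧
  ∀ n a b, w[n]? = some a → w[n + 1]? = some b →
    ∃ p, Q.lsrc a = some p ∧ Q.ltgt b = some (Q.nneg p)

/-- A word is right inextensible iff its last letter is a trivial letter. -/
def RightInext (w : Q.Wd) : Prop := ∃ i ρ, w.getLast? = some (.triv i ρ)

/-- A word is left inextensible iff its inverse is right inextensible. -/
def LeftInext (w : Q.Wd) : Prop := Q.RightInext (Q.winv w)

/-- A string: a left and right inextensible word. -/
def IsString (w : Q.Wd) : Prop := Q.IsWord w ∧ Q.LeftInext w ∧ Q.RightInext w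

/-- A band: a (nonempty) word `w` such that `ww` is also a word. -/
def IsBand (w : Q.Wd) : Prop := w ≠ [] ∧ Q.IsWord (w ++ w)

/-- A primitive word is not a proper power. -/
def Primitive (w : Q.Wd) : Prop :=
  ¬ ∃ (v : Q.Wd) (n : ℕ), 2 ≤ n ∧ w = (List.replicate n v).flatten

/-- The rotation `w^{[k+1]} w_{[k]}` of a word. -/
def rot (w : Q.Wd) (k : ℕ) : Q.Wd := w.drop k ++ w.take k

/-- A symmetric string: `w = w⁻¹`. -/
def SymmString (w : Q.Wd) : Prop := Q.IsString w ∧ Q.winv w = w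

/-- Primitive bands. -/
def pBa (w : Q.Wd) : Prop := Q.IsBand w ∧ Q.Primitive w

/-- A symmetric (primitive) band: `w⁻¹` is a rotation of `w`. -/
def SymmBand (w : Q.Wd) : Prop := Q.pBa w ∧ ∃ k, Q.winv w = Q.rot w k

/-- A symmetric primitive band in standard form `ε^* v ζ^* v⁻¹`. -/
def StdSymmBand (w : Q.Wd) : Prop :=
  Q.pBa w ∧ ∃ (a b : Q.A) (v : Q.Wd), Q.special a ∧ Q.special b ∧
    w = .sp a :: (v ++ .sp b :: Q.winv v)

/-- `pBa'`: asymmetric primitive bands together with symmetric primitive bands in standard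
form. -/
def pBa' (w : Q.Wd) : Prop :=
  (Q.pBa w ∧ ¬ ∃ k, Q.winv w = Q.rot w k) ∨ Q.StdSymmBand w

/-- The partial order on letters with a common target: `α < 1_{i,ρ} < β⁻¹`. -/
def letterLT : Q.Ltr → Q.Ltr → Prop
  | .ord a, .triv i ρ => ¬ Q.special a ∧ Q.trivOK i ρ ∧ Q.tgt a = (i, ρ)
  | .ord a, .inv b => ¬ Q.special a ∧ ¬ Q.special b ∧ Q.tgt a = Q.src b
  | .triv i ρ, .inv b => ¬ Q.special b ∧ Q.trivOK i ρ ∧ Q.src b = (i, ρ)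
  | _, _ => False

/-- The induced lexicographic order on words. -/
def wordLT (v w : Q.Wd) : Prop :=
  ∃ (p u u' : Q.Wd) (a b : Q.Ltr), v = p ++ a :: u ∧ w = p ++ b :: u' ∧ Q.letterLT a b

def wordLE (v w : Q.Wd) : Prop := Q.wordLT v w ∨ v = w

/-- The associated gentle polarized quiver `Q̂`: all arrows become ordinary. -/
def hat : PolQuiv := ⟨Q.V, Q.A, fun _ => False, Q.src, Q.tgt⟩

/-- A vertex carrying a special loop. -/
def specialAt (i : Q.V) : Prop := ∃ ε, Q.special ε ∧ (Q.src ε).1 = i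

/-- The special loop at a vertex, as an `Option`. -/
noncomputable def sloopL (i : Q.V) : Option Q.A :=
  if h : Q.specialAt i then some h.choose else none

/-- The `Q̂`-letter `ε^{δ1}` at a vertex carrying a special loop (junk otherwise). -/
noncomputable def epsAt (i : Q.V) (δ : Bool) : Q.Ltr :=
  if h : Q.specialAt i then (if δ then .ord h.choose else .inv h.choose) else .triv i false

/-- The canonical map `F` on letters, from letters of `Q̂` to letters of `Q`. -/
noncomputable def Fmap : Q.Ltr → Q.Ltr
  | .ord a => if Q.special a then .sp a else .ord a
  | .inv a => if Q.special a then .sp (Q.dual a) else .inv a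
  | .sp a => .sp a
  | .triv i ρ => if h : ρ = false ∧ Q.specialAt i then .sp h.2.choose else .triv i ρ
  | .trivInv i ρ => if h : ρ = false ∧ Q.specialAt i then .sp h.2.choose else .trivInv i ρ

/-- `F` on words. -/
noncomputable def Fword (w : Q.Wd) : Q.Wd := w.map Q.Fmap

/-- Punctured letters: trivial letters `1_{i,-1}^{±1}` with a special loop at `i`. -/
def IsPunct : Q.Ltr → Prop
  | .triv i ρ => ρ = false ∧ Q.specialAt i
  | .trivInv i ρ => ρ = false ∧ Q.specialAt i
  | _ => False

def LeftPunct (w : Q.Wd) : Prop := ∃ l, w.head? = some l ∧ Q.IsPunct l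
def RightPunct (w : Q.Wd) : Prop := ∃ l, w.getLast? = some l ∧ Q.IsPunct l

open Classical in
/-- The completion `x̄` of a string or band `x` for `Q̂`: apply `F` after reflecting at each
punctured end. -/
noncomputable def completionW (w : Q.Wd) : Q.Wd :=
  if Q.LeftPunct w then
    if Q.RightPunct w then Q.Fword w ++ Q.Fword (Q.hat.winv ((w.drop 1).dropLast))
    else Q.Fword (Q.hat.winv (w.drop 1)) ++ Q.Fword w
  else
    if Q.RightPunct w then Q.Fword w ++ Q.Fword (Q.hat.winv w.dropLast)
    else Q.Fword w

/-- The letter of `A(w)` at position `k`, for `w` a string: special letters `ε^*` are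
replaced by `ε` if `(w_{[k-1]})⁻¹ > w^{[k+1]}` and by `ε⁻¹` if `(w_{[k-1]})⁻¹ < w^{[k+1]}`. -/
def ALetterStr (w : Q.Wd) (k : ℕ) (xl : Q.Ltr) : Prop :=
  match w[k]? with
  | some (.sp a) =>
      (xl = .ord a ∧ Q.wordLT (w.drop (k + 1)) (Q.winv (w.take k))) ∨
      (xl = .inv a ∧ Q.wordLT (Q.winv (w.take k)) (w.drop (k + 1)))
  | some l => xl = l
  | none => False

/-- The letter of `A(w)` at position `k`, for `w` a band, with the comparison
`w_{[k-1]}⁻¹ (w^{[k+1]})⁻¹` versus `w^{[k+1]} w_{[k-1]}`. -/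
def ALetterBand (w : Q.Wd) (k : ℕ) (xl : Q.Ltr) : Prop :=
  match w[k]? with
  | some (.sp a) =>
      (xl = .ord a ∧
        Q.wordLT (w.drop (k + 1) ++ w.take k) (Q.winv (w.drop (k + 1) ++ w.take k))) ∨
      (xl = .inv a ∧
        Q.wordLT (Q.winv (w.drop (k + 1) ++ w.take k)) (w.drop (k + 1) ++ w.take k))
  | some l => xl = l
  | none => False

/-- `x = A(w)` for an asymmetric string `w`. -/
def AStrAsym (w x : Q.Wd) : Prop :=
  Q.IsString w ∧ Q.winv w ≠ w ∧ x.length = w.length ∧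
  ∀ k xl, x[k]? = some xl → Q.ALetterStr w k xl

/-- `x = A(w)` for a symmetric string `w = v ε^* v⁻¹`. -/
def AStrSym (w x : Q.Wd) : Prop :=
  Q.IsString w ∧ Q.winv w = w ∧
  ∃ (v : Q.Wd) (a : Q.A), Q.special a ∧ w = v ++ .sp a :: Q.winv v ∧
    ∃ y : Q.Wd, y.length = v.length ∧ (∀ k xl, y[k]? = some xl → Q.ALetterStr w k xl) ∧
      x = y ++ [.triv (Q.src a).1 false]

/-- `x = A(w)` for an asymmetric primitive band `w`. -/
def ABandAsym (w x : Q.Wd) : Prop :=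
  Q.pBa w ∧ (¬ ∃ k, Q.winv w = Q.rot w k) ∧ x.length = w.length ∧
  ∀ k xl, x[k]? = some xl → Q.ALetterBand w k xl

/-- `x = A(w)` for a symmetric band in standard form `w = ε_a^* v ε_b^* v⁻¹`. -/
def ABandSym (w x : Q.Wd) : Prop :=
  Q.pBa w ∧ ∃ (a b : Q.A) (v : Q.Wd), Q.special a ∧ Q.special b ∧
    w = .sp a :: (v ++ .sp b :: Q.winv v) ∧
    ∃ y : Q.Wd, y.length = v.length ∧
      (∀ k xl, y[k]? = some xl → Q.ALetterBand w (k + 1) xl) ∧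
      x = .trivInv (Q.src a).1 false :: (y ++ [.triv (Q.src b).1 false])

/-- `x = A(w)` for `w ∈ St(Q) ∪ pBa'(Q)`. -/
def ARel (w x : Q.Wd) : Prop :=
  Q.AStrAsym w x ∨ Q.AStrSym w x ∨ Q.ABandAsym w x ∨ Q.ABandSym w x

/-- Admissible strings for `Q̂` (with respect to `F`), following Qiu–Zhou. -/
def AdmStr (x : Q.Wd) : Prop :=
  Q.hat.IsString x ∧
  (∀ k a, (x[k]? = some (.ord a) ∨ x[k]? = some (.inv a)) → Q.special a →
    Q.hat.winv (x.take k) ≠ x.drop k ∧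
    (x[k]? = some (.ord a) ↔ Q.hat.wordLT (x.drop (k + 1)) (Q.hat.winv (x.take k)))) ∧
  (Q.LeftPunct x → Q.RightPunct x →
    Q.IsBand (Q.completionW x) ∧ Q.Primitive (Q.completionW x))

/-- Admissible bands for `Q̂` (with respect to `F`). -/
def AdmBand (x : Q.Wd) : Prop :=
  Q.hat.IsBand x ∧ Q.hat.Primitive x ∧
  (∀ k a, (x[k]? = some (.ord a) ∨ x[k]? = some (.inv a)) → Q.special a →
    Q.hat.winv (x.drop (k + 1) ++ x.take k) ≠ x.drop (k + 1) ++ x.take k ∧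
    (x[k]? = some (.ord a) ↔
      Q.hat.wordLT (x.drop (k + 1) ++ x.take k)
        (Q.hat.winv (x.drop (k + 1) ++ x.take k)))) ∧
  (Q.IsBand (Q.Fword x) ∧ Q.Primitive (Q.Fword x) ∧
    ¬ ∃ k, Q.winv (Q.Fword x) = Q.rot (Q.Fword x) k)

/-- Admissible words. -/
def IsAdm (x : Q.Wd) : Prop := Q.AdmStr x ∨ Q.AdmBand x

end PolQuiv

end SG

/-! Since `w = w⁻¹`, the two halves of `w` are inverse to each other. If `w` had even length,
its two middle letters would be `x` and `x⁻¹`; but a word needs `s(x) = -t(x⁻¹)`, while `x⁻¹`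
ends with the polarization that `x` starts with. So `w` has odd length and its middle letter is
its own inverse, which only a special letter can be. Uniqueness is a length count. -/

namespace SG

namespace PolQuiv

variable {Q : PolQuiv}

@[simp]
lemma length_winv (w : Q.Wd) : (Q.winv w).length = w.length := by
  simp [winv]

@[simp]
lemma winv_nil : Q.winv [] = [] := rfl

@[simp]
lemma winv_append (u v : Q.Wd) : Q.winv (u ++ v) = Q.winv v ++ Q.winv u := by
  simp [winv]

@[simp]
lemma winv_cons (x : Q.Ltr) (v : Q.Wd) : Q.winv (x :: v) = Q.winv v ++ [Q.linv x] := by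
  simp [winv]

lemma exists_eq_sp_of_linv_eq_self {x : Q.Ltr} (hx : Q.linv x = x) : ∃ a, x = .sp a := by
  cases x <;> simp_all [linv]

lemma ltgt_linv_map_snd (x : Q.Ltr) :
    (Q.ltgt (Q.linv x)).map Prod.snd = (Q.lsrc x).map Prod.snd := by
  cases x <;> rfl

lemma not_isWord_append_cons_linv_cons (u v : Q.Wd) (x : Q.Ltr) :
    ¬ Q.IsWord (u ++ x :: Q.linv x :: v) := by
  rintro ⟨-, hadj⟩
  obtain ⟨p, hx, hlx⟩ := hadj u.length x (Q.linv x) (by simp) (by simp)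
  have := ltgt_linv_map_snd x
  simp [hx, hlx, nneg] at this

lemma IsWord.of_append_left {u v : Q.Wd} (h : Q.IsWord (u ++ v)) : Q.IsWord u := by
  refine ⟨fun l hl => h.1 l (List.mem_append_left v hl), fun n a b ha hb => ?_⟩
  have hn : n + 1 < u.length := (List.getElem?_eq_some_iff.1 hb).1
  exact h.2 n a b (by rwa [List.getElem?_append_left (by omega)])
    (by rwa [List.getElem?_append_left hn])

lemma RightInext.of_append_sp_cons {u v : Q.Wd} {a : Q.A}
    (h : Q.RightInext (u ++ .sp a :: v)) : Q.RightInext v := by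
  obtain ⟨i, ρ, h⟩ := h
  refine ⟨i, ρ, ?_⟩
  cases v with
  | nil => simp at h
  | cons y v => simpa [List.getLast?_append, List.getLast?_cons] using h

lemma append_cons_winv_injective {v v' : Q.Wd} {x x' : Q.Ltr}
    (h : v ++ x :: Q.winv v = v' ++ x' :: Q.winv v') : v = v' ∧ x = x' := by
  have hlen : v.length = v'.length := by
    have := congrArg List.length h
    simp only [List.length_append, List.length_cons, length_winv] at this
    omega
  obtain ⟨rfl, h⟩ := List.append_inj h hlen
  exact ⟨rfl, (List.cons.inj h).1⟩

lemma IsWord.odd_length_of_winv_eq_self {w : Q.Wd} (hw : Q.IsWord w) (hsym : Q.winv w = w)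
    (hne : w ≠ []) : Odd w.length := by
  by_contra heven
  obtain ⟨m, hm⟩ := Nat.not_odd_iff_even.1 heven
  have hu : (w.take m).length = m := by simp only [List.length_take]; omega
  have hr : (w.drop m).length = m := by simp only [List.length_drop]; omega
  have hsplit := List.take_append_drop m w
  rw [← hsplit, winv_append] at hsym
  have hwinv : Q.winv (w.take m) = w.drop m :=
    (List.append_inj hsym (by rw [length_winv, hr, hu])).2
  rcases List.eq_nil_or_concat' (w.take m) with hnil | ⟨u, x, hux⟩
  · have hm0 : m = 0 := by simpa [hnil] using hu.symm
    exact hne (List.length_eq_zero_iff.1 (by omega))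
  · rw [← hsplit, ← hwinv, hux] at hw
    exact not_isWord_append_cons_linv_cons u (Q.winv u) x (by simpa using hw)

lemma exists_eq_append_cons_winv_of_odd {w : Q.Wd} (hsym : Q.winv w = w) (hodd : Odd w.length) :
    ∃ v x, Q.linv x = x ∧ w = v ++ x :: Q.winv v := by
  obtain ⟨m, hm⟩ := hodd
  obtain ⟨x, r, hr⟩ : ∃ x r, w.drop m = x :: r :=
    List.ne_nil_iff_exists_cons.1 (by simp only [ne_eq, List.drop_eq_nil_iff, not_le]; omega)
  have hu : (w.take m).length = m := by simp only [List.length_take]; omega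
  have hrlen : r.length = m := by
    have := congrArg List.length hr
    simp only [List.length_drop, List.length_cons] at this; omega
  have hsplit : w = w.take m ++ x :: r := by rw [← hr, List.take_append_drop]
  rw [hsplit, winv_append, winv_cons, List.append_assoc, List.singleton_append] at hsym
  obtain ⟨-, hmid⟩ := List.append_inj hsym (by rw [length_winv, hrlen, hu])
  obtain ⟨hx, hrw⟩ := List.cons.inj hmid
  exact ⟨w.take m, x, hx, hsplit.trans (by rw [hrw])⟩

end PolQuiv

open PolQuiv

theorem statement_3_general (Q : PolQuiv)
    (w : Q.Wd) (hw : Q.IsString w) (hsym : Q.winv w = w) :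
    ∃! vε : Q.Wd × Q.Ltr,
      (∃ a, Q.special a ∧ vε.2 = .sp a) ∧ Q.linv vε.2 = vε.2 ∧
      Q.IsWord vε.1 ∧ Q.LeftInext vε.1 ∧ w = vε.1 ++ vε.2 :: Q.winv vε.1 := by
  obtain ⟨hword, -, hright⟩ := hw
  have hne : w ≠ [] := by rintro rfl; simp [RightInext] at hright
  obtain ⟨v, x, hx, rfl⟩ :=
    exists_eq_append_cons_winv_of_odd hsym (hword.odd_length_of_winv_eq_self hsym hne)
  obtain ⟨a, rfl⟩ := exists_eq_sp_of_linv_eq_self hx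
  refine ⟨(v, .sp a), ⟨⟨a, hword.1 (.sp a) (by simp), rfl⟩, hx, hword.of_append_left,
    hright.of_append_sp_cons, rfl⟩, ?_⟩
  rintro ⟨v', x'⟩ ⟨-, -, -, -, h⟩
  obtain ⟨rfl, rfl⟩ := append_cons_winv_injective h
  rfl

/-- **Symmetric strings.**  Let `Q` be a polarized quiver in which all special arrows are
loops, and let `w` be a symmetric string for `Q` (i.e. `w = w⁻¹`).  Then there exist a
unique left inextensible word `v` and a unique special letter `ε^*` with `ε^* = (ε^*)⁻¹`
such that `w = v ε^* v⁻¹`. -/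
theorem statement_3 (Q : PolQuiv) (hpol : Q.IsPolarized)
    (hloops : ∀ a, Q.special a → Q.IsLoopArr a)
    (w : Q.Wd) (hw : Q.IsString w) (hsym : Q.winv w = w) :
    ∃! vε : Q.Wd × Q.Ltr,
      (∃ a, Q.special a ∧ vε.2 = .sp a) ∧ Q.linv vε.2 = vε.2 ∧
      Q.IsWord vε.1 ∧ Q.LeftInext vε.1 ∧ w = vε.1 ++ vε.2 :: Q.winv vε.1 :=
  statement_3_general Q w hw hsym

end SG
end

section
/- Let k be a field of characteristic different from 2, m ≥ 1, and δ ∈ {1,−1}. Let J_m(δ) be the m×m Jordan block with eigenvalue δ (entries δ on the diagonal, 1 on the first subdiagonal used in the paper's convention, 0 elsewhere), and let S̃_{m,δ} be the m×m matrix with entries (S̃_{m,δ})_{i,j} = (−1)^{i+1} δ^{i+j} C(i,j) for 1 ≤ j ≤ i ≤ m and 0 for 1 ≤ i < j ≤ m, where C(i,j) is the binomial coefficient. Then S̃_{m,δ}^2 = E_m (the identity matrix) and S̃_{m,δ} · J_m(δ) = J_m(δ)^{-1} · S̃_{m,δ}. Consequently, setting W_{m,δ}(S) := S̃_{m,δ}·J_m(δ)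 and W_{m,δ}(T) := S̃_{m,δ} defines a pair of involutive m×m matrices, i.e. W_{m,δ}(S)^2 = E_m and W_{m,δ}(T)^2 = E_m. -/
/-! Since δ² = 1, the `(i, j)` entry of `S̃` (indices from `0`) is `(-1)^i δ^(i+j) C(i+1, j+1)`.
By `C(n, k) C(k, s) = C(n, s) C(n-s, k-s)` the entries of `S̃²` become alternating binomial sums,
which vanish off the diagonal, and `J S̃ J = S̃` is Pascal's rule entrywise. Together with
`S̃² = 1` this gives `S̃ J = J⁻¹ S̃` and `(S̃ J)² = 1`. -/

namespace SG

open Matrix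

/-- The `m×m` Jordan block with eigenvalue `δ`: entries `δ` on the diagonal and `1` on the
first subdiagonal. -/
def Jmat (k : Type) [Field k] (m : ℕ) (δ : k) : Matrix (Fin m) (Fin m) k :=
  Matrix.of fun i j => if i = j then δ else if (i : ℕ) = (j : ℕ) + 1 then 1 else 0

/-- The matrix `S̃_{m,δ}` with entries `(-1)^{i+1} δ^{i+j} C(i,j)` for `1 ≤ j ≤ i ≤ m`
(in the paper's 1-based indexing) and `0` above the diagonal. -/
def Smat (k : Type) [Field k] (m : ℕ) (δ : k) : Matrix (Fin m) (Fin m) k :=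
  Matrix.of fun i j =>
    if (j : ℕ) ≤ (i : ℕ) then
      (-1 : k) ^ ((i : ℕ) + 1 + 1) * δ ^ (((i : ℕ) + 1) + ((j : ℕ) + 1)) *
        (Nat.choose ((i : ℕ) + 1) ((j : ℕ) + 1) : k)
    else 0

open Finset

section Entries

variable {R : Type*} [CommRing R] {δ : R}

def smatEntry (δ : R) (a b : ℕ) : R :=
  (-1) ^ a * δ ^ (a + b) * ((a + 1).choose (b + 1) : R)

lemma smatEntry_eq_zero_of_lt (δ : R) {a b : ℕ} (h : a < b) : smatEntry δ a b = 0 := by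
  simp [smatEntry, Nat.choose_eq_zero_of_lt (Nat.succ_lt_succ h)]

lemma smatEntry_pascal (hδ : δ ^ 2 = 1) (a b : ℕ) :
    δ * smatEntry δ (a + 1) (b + 1) + δ * smatEntry δ a b + smatEntry δ a (b + 1) = 0 := by
  simp only [smatEntry, Nat.choose_succ_succ' (a + 1) (b + 1), Nat.cast_add]
  linear_combination -(-1) ^ a * δ ^ (a + b) * δ * ((a + 1).choose (b + 2) +
    (a + 1).choose (b + 1) : R) * hδ

lemma smatEntry_mul_smatEntry (hδ : δ ^ 2 = 1) (i j t : ℕ) :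
    smatEntry δ i (j + t) * smatEntry δ (j + t) j =
      smatEntry δ i j * (-1) ^ j * ((-1) ^ t * ((i - j).choose t : R)) := by
  have hchoose : ((i + 1).choose (j + t + 1) : R) * (j + t + 1).choose (j + 1) =
      (i + 1).choose (j + 1) * (i - j).choose t := by
    have h := Nat.choose_mul (n := i + 1) (by omega : j + 1 ≤ j + t + 1)
    rw [Nat.add_sub_add_right, Nat.add_sub_add_right, Nat.add_sub_cancel_left] at h
    exact_mod_cast congrArg (Nat.cast : ℕ → R) h
  have hpow : δ ^ (i + (j + t)) * δ ^ (j + t + j) = δ ^ (i + j) := by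
    rw [← pow_add, show i + (j + t) + (j + t + j) = i + j + 2 * (j + t) by ring, pow_add,
      pow_mul, hδ, one_pow, mul_one]
  calc smatEntry δ i (j + t) * smatEntry δ (j + t) j
      = (-1) ^ (i + j + t) * (δ ^ (i + (j + t)) * δ ^ (j + t + j)) *
          (((i + 1).choose (j + t + 1) : R) * (j + t + 1).choose (j + 1)) := by
        simp only [smatEntry]; ring
    _ = _ := by rw [hpow, hchoose, smatEntry]; ring

lemma alternating_sum_range_choose (n : ℕ) :
    ∑ t ∈ range (n + 1), (-1) ^ t * (n.choose t : R) = if n = 0 then 1 else 0 := by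
  exact_mod_cast congrArg (Int.cast : ℤ → R) Int.alternating_sum_range_choose

lemma sum_smatEntry_mul_smatEntry (hδ : δ ^ 2 = 1) (i j : ℕ) :
    ∑ l ∈ range (i + 1), smatEntry δ i l * smatEntry δ l j = if i = j then 1 else 0 := by
  rcases lt_or_ge i j with hij | hji
  · rw [if_neg hij.ne]
    exact sum_eq_zero fun l hl =>
      by rw [smatEntry_eq_zero_of_lt δ (by have := mem_range.mp hl; omega : l < j), mul_zero]
  · obtain ⟨n, rfl⟩ := Nat.exists_eq_add_of_le hji
    have hlow : ∑ l ∈ range j, smatEntry δ (j + n) l * smatEntry δ l j = 0 :=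
      sum_eq_zero fun l hl => by rw [smatEntry_eq_zero_of_lt δ (mem_range.mp hl), mul_zero]
    rw [add_assoc, sum_range_add, hlow, zero_add]
    simp_rw [smatEntry_mul_smatEntry hδ]
    rw [← mul_sum, Nat.add_sub_cancel_left, alternating_sum_range_choose]
    rcases Nat.eq_zero_or_pos n with rfl | hn
    · simp [smatEntry, ← pow_add, ← two_mul, pow_mul, hδ]
    · simp [hn.ne']

end Entries

variable {k : Type} [Field k] {m : ℕ} {δ : k}

lemma Smat_apply (hδ : δ ^ 2 = 1) (i j : Fin m) : Smat k m δ i j = smatEntry δ i j := by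
  rw [Smat, of_apply]
  split_ifs with hji
  · rw [smatEntry, show (i : ℕ) + 1 + ((j : ℕ) + 1) = i + j + 2 by ring, pow_add δ, hδ]
    ring
  · exact (smatEntry_eq_zero_of_lt δ (not_le.mp hji)).symm

lemma mul_Jmat_apply (A : Matrix (Fin m) (Fin m) k) (i j : Fin m) :
    (A * Jmat k m δ) i j = A i j * δ + ∑ q : Fin m, if (q : ℕ) = j + 1 then A i q else 0 := by
  have hterm : ∀ q, A i q * Jmat k m δ q j =
      (if q = j then A i j * δ else 0) + (if (q : ℕ) = j + 1 then A i q else 0) := by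
    intro q
    by_cases hq : q = j <;> simp [Jmat, hq]
  rw [mul_apply, sum_congr rfl fun q _ => hterm q, sum_add_distrib, sum_ite_eq']
  simp

lemma Jmat_mul_apply (A : Matrix (Fin m) (Fin m) k) (i j : Fin m) :
    (Jmat k m δ * A) i j = δ * A i j + ∑ p : Fin m, if (p : ℕ) + 1 = i then A p j else 0 := by
  have hterm : ∀ p, Jmat k m δ i p * A p j =
      (if p = i then δ * A i j else 0) + (if (p : ℕ) + 1 = i then A p j else 0) := by
    intro p
    by_cases hp : p = i
    · simp [Jmat, hp]
    · simp [Jmat, hp, Ne.symm hp, eq_comm (a := (i : ℕ))]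
  rw [mul_apply, sum_congr rfl fun p _ => hterm p, sum_add_distrib, sum_ite_eq']
  simp

lemma Smat_mul_self (hδ : δ ^ 2 = 1) : Smat k m δ * Smat k m δ = 1 := by
  ext i j
  have hupper : ∀ l ∈ range m, l ∉ range (i + 1) → smatEntry δ i l * smatEntry δ l j = 0 :=
    fun l _ hl => by rw [smatEntry_eq_zero_of_lt δ (by simpa using hl), zero_mul]
  rw [mul_apply, one_apply]
  simp_rw [Smat_apply hδ]
  rw [Fin.sum_univ_eq_sum_range (fun l => smatEntry δ i l * smatEntry δ l j),
    ← sum_subset (range_subset_range.mpr i.isLt) hupper, sum_smatEntry_mul_smatEntry hδ]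
  simp only [Fin.val_inj]

lemma Smat_mul_Jmat_apply (hδ : δ ^ 2 = 1) (i j : Fin m) :
    (Smat k m δ * Jmat k m δ) i j = smatEntry δ i j * δ + smatEntry δ i (j + 1) := by
  rw [mul_Jmat_apply]
  simp_rw [Smat_apply hδ]
  rw [Fin.sum_univ_eq_sum_range (fun l => if l = j + 1 then smatEntry δ i l else 0), sum_ite_eq']
  split_ifs with hj
  · rfl
  · rw [smatEntry_eq_zero_of_lt δ (show (i : ℕ) < j + 1 by rw [mem_range] at hj; omega)]

lemma Jmat_mul_Smat_mul_Jmat (hδ : δ ^ 2 = 1) :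
    Jmat k m δ * (Smat k m δ * Jmat k m δ) = Smat k m δ := by
  ext i j
  rw [Jmat_mul_apply]
  simp_rw [Smat_mul_Jmat_apply hδ, Smat_apply hδ]
  rw [Fin.sum_univ_eq_sum_range
    (fun l => if l + 1 = i then smatEntry δ l j * δ + smatEntry δ l (j + 1) else 0)]
  rcases i with ⟨_ | a, hi⟩
  · simp only [Nat.add_eq_zero_iff, one_ne_zero, and_false, if_false, sum_const_zero, add_zero]
    rw [smatEntry_eq_zero_of_lt δ j.val.succ_pos]
    linear_combination smatEntry δ 0 j * hδ
  · simp only [Nat.add_right_cancel_iff, sum_ite_eq', mem_range, show a < m by omega,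
      if_true]
    linear_combination smatEntry δ (a + 1) j * hδ + smatEntry_pascal hδ a j

lemma mul_eq_inv_mul_of_mul_self_eq_one {n R : Type*} [Fintype n] [DecidableEq n]
    [CommRing R] {S J : Matrix n n R} (hS : S * S = 1) (hJSJ : J * (S * J) = S) :
    S * J = J⁻¹ * S := by
  have hJinv : J⁻¹ = S * J * S :=
    inv_eq_right_inv (by rw [← Matrix.mul_assoc, hJSJ, hS])
  rw [hJinv, Matrix.mul_assoc _ S, hS, Matrix.mul_one]

theorem statement_14_general (k : Type) [Field k]
    (m : ℕ) (δ : k) (hδ : δ = 1 ∨ δ = -1) :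
    Smat k m δ * Smat k m δ = 1 ∧
    Smat k m δ * Jmat k m δ = (Jmat k m δ)⁻¹ * Smat k m δ ∧
    (Smat k m δ * Jmat k m δ) * (Smat k m δ * Jmat k m δ) = 1 := by
  have hδ2 : δ ^ 2 = 1 := by rcases hδ with rfl | rfl <;> norm_num
  have hS := Smat_mul_self (m := m) hδ2
  have hJSJ := Jmat_mul_Smat_mul_Jmat (m := m) hδ2
  refine ⟨hS, mul_eq_inv_mul_of_mul_self_eq_one hS hJSJ, ?_⟩
  rw [Matrix.mul_assoc, hJSJ, hS]

/-- **The involutions `S̃_{m,δ}` and `W_{m,δ}`.**  Let `k` be a field with `char k ≠ 2`,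
`m ≥ 1` and `δ ∈ {1,-1}`.  Then `S̃_{m,δ}² = E_m` and
`S̃_{m,δ} · J_m(δ) = J_m(δ)⁻¹ · S̃_{m,δ}`; consequently `W_{m,δ}(S) := S̃_{m,δ}·J_m(δ)` and
`W_{m,δ}(T) := S̃_{m,δ}` are involutive `m×m` matrices. -/
theorem statement_14 (k : Type) [Field k] (hchar : (2 : k) ≠ 0)
    (m : ℕ) (hm : 1 ≤ m) (δ : k) (hδ : δ = 1 ∨ δ = -1) :
    Smat k m δ * Smat k m δ = 1 ∧
    Smat k m δ * Jmat k m δ = (Jmat k m δ)⁻¹ * Smat k m δ ∧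
    (Smat k m δ * Jmat k m δ) * (Smat k m δ * Jmat k m δ) = 1 :=
  statement_14_general k m δ hδ

end SG
end
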